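/- Let $\sigma>0$, $0<t<\infty$, $k\in\mathbb{Z}$, and $0<\epsilon<\sigma-d/t$ with $\sigma>d/t$. Define $E_0=\{y\in\mathbb{R}^d:|y|\le 2^{-k}\}$ and $E_j=\{y:2^{-k+j-1}<|y|\le 2^{-k+j}\}$ for $j\ge 1$. Then for any measurable function $f$ and any $x\in\mathbb{R}^d$, $\int_{\mathbb{R}^d}\frac{|f(x-y)|^t}{(1+2^k|y|)^{\sigma t}}\,dy \le C\, 2^{-kd}\big(\mathcal{M}_t^{k,\epsilon}f(x)\big)^t$, where $C$ depends only on $d,t,\sigma,\epsilon$. -/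

import Mathlib

/-! Cover `ℝᵈ` by the balls `|y| < 2^(n+1-k)`, `n ∈ ℕ`: every `y` lies in one of them on which
`1 + 2^k |y| ≥ 2^n`, so the weight is at most `2^(-nσt)` there. The ball of radius `2^(n+1-k)`
around `x` sits in a cube of side `l = 2^(n+2-k)` containing `x`, with `2^k l > 1`, so the damped
part of `𝓜_t^{k,ε} f (x)` bounds the integral over it by `l^d (2^k l)^(εt) 𝓜^t`. The resulting
series is geometric with ratio `2^(d + εt - σt) < 1`, which is exactly the hypothesis `ε < σ - d/t`. -/

open MeasureTheory ENNReal

noncomputable section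

abbrev Euc (d : ℕ) := EuclideanSpace ℝ (Fin d)

/-- The axis-parallel cube with lower corner `a` and side length `l`. -/
def cube (d : ℕ) (a : Euc d) (l : ℝ) : Set (Euc d) :=
  {y | ∀ i, a i ≤ y i ∧ y i ≤ a i + l}

/-- The maximal operator `𝓜_r^{k,ε}` from the paper: averages over small cubes
(`2^k l(Q) ≤ 1`) plus damped averages over large cubes. -/
noncomputable def Mrke (d : ℕ) (r ε : ℝ) (k : ℤ) (f : Euc d → ℂ) (x : Euc d) : ℝ≥0∞ :=
  (⨆ (a : Euc d) (l : ℝ) (_ : 0 < l) (_ : (2:ℝ)^k * l ≤ 1) (_ : x ∈ cube d a l),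
      ((volume (cube d a l))⁻¹ * ∫⁻ y in cube d a l, (‖f y‖₊ : ℝ≥0∞) ^ r) ^ (1/r))
  + (⨆ (a : Euc d) (l : ℝ) (_ : 0 < l) (_ : 1 < (2:ℝ)^k * l) (_ : x ∈ cube d a l),
      ENNReal.ofReal (((2:ℝ)^k * l) ^ (-ε)) *
        ((volume (cube d a l))⁻¹ * ∫⁻ y in cube d a l, (‖f y‖₊ : ℝ≥0∞) ^ r) ^ (1/r))

lemma cube_eq_preimage_pi (d : ℕ) (a : Euc d) (l : ℝ) :
    cube d a l = WithLp.ofLp ⁻¹' Set.univ.pi fun i => Set.Icc (a i) (a i + l) := by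
  ext y
  simp only [Set.mem_preimage, Set.mem_univ_pi, Set.mem_Icc]
  rfl

lemma volume_cube (d : ℕ) (a : Euc d) (l : ℝ) : volume (cube d a l) = ENNReal.ofReal l ^ d := by
  rw [cube_eq_preimage_pi, (PiLp.volume_preserving_ofLp (Fin d)).measure_preimage
    (MeasurableSet.univ_pi fun _ => measurableSet_Icc).nullMeasurableSet, volume_pi_pi]
  simp [Real.volume_Icc]

lemma sub_mem_cube_of_norm_le {d : ℕ} (x : Euc d) {y : Euc d} {R : ℝ} (hy : ‖y‖ ≤ R) :
    x - y ∈ cube d (WithLp.toLp 2 fun i => x i - R) (2 * R) := by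
  intro i
  have hyi := abs_le.1 ((PiLp.norm_apply_le y i).trans hy)
  simp only [PiLp.sub_apply]
  constructor <;> linarith [hyi.1, hyi.2]

lemma setLIntegral_cube_le_Mrke {d : ℕ} {r : ℝ} (hr : 0 < r) (ε : ℝ) (k : ℤ) (f : Euc d → ℂ)
    {x a : Euc d} {l : ℝ} (hl : 0 < l) (hkl : 1 < (2:ℝ)^k * l) (hx : x ∈ cube d a l) :
    ∫⁻ y in cube d a l, (‖f y‖₊ : ℝ≥0∞) ^ r ≤
      ENNReal.ofReal (l ^ d * ((2:ℝ)^k * l) ^ (ε * r)) * Mrke d r ε k f x ^ r := by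
  set Q := cube d a l
  set A := (volume Q)⁻¹ * ∫⁻ y in Q, (‖f y‖₊ : ℝ≥0∞) ^ r
  set M := Mrke d r ε k f x
  have hkl0 : 0 < (2:ℝ)^k * l := one_pos.trans hkl
  set u := ENNReal.ofReal (((2:ℝ)^k * l) ^ ε)
  have hu0 : u ≠ 0 := (ENNReal.ofReal_pos.2 (Real.rpow_pos_of_pos hkl0 _)).ne'
  have hvol : volume Q = ENNReal.ofReal (l ^ d) := by rw [volume_cube, ofReal_pow hl.le]
  have hdamped : u⁻¹ * A ^ (1/r) ≤ M := by
    rw [← ENNReal.ofReal_inv_of_pos (Real.rpow_pos_of_pos hkl0 _), ← Real.rpow_neg hkl0.le]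
    exact le_add_left (le_iSup₂_of_le a l <| le_iSup₂_of_le hl hkl <| le_iSup_of_le hx le_rfl)
  have hA : A ≤ ENNReal.ofReal (((2:ℝ)^k * l) ^ (ε * r)) * M ^ r :=
    calc A = (A ^ (1/r)) ^ r := by rw [← ENNReal.rpow_mul, one_div_mul_cancel hr.ne', rpow_one]
      _ ≤ (u * M) ^ r := rpow_le_rpow ((ENNReal.inv_mul_le_iff hu0 ofReal_ne_top).1 hdamped) hr.le
      _ = _ := by
        rw [mul_rpow_of_nonneg _ _ hr.le, ofReal_rpow_of_nonneg (by positivity) hr.le,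
          ← Real.rpow_mul hkl0.le]
  calc ∫⁻ y in Q, (‖f y‖₊ : ℝ≥0∞) ^ r = volume Q * A := by
        rw [← mul_assoc, ENNReal.mul_inv_cancel (by simp [hvol, hl]) (by simp [hvol]), one_mul]
    _ ≤ ENNReal.ofReal (l ^ d) * (ENNReal.ofReal (((2:ℝ)^k * l) ^ (ε * r)) * M ^ r) := by
        rw [hvol]; gcongr
    _ = _ := by rw [ofReal_mul (by positivity), mul_assoc]

lemma setLIntegral_ball_le_Mrke {d : ℕ} {r : ℝ} (hr : 0 < r) (ε : ℝ) (k : ℤ) (f : Euc d → ℂ)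
    (x : Euc d) {R : ℝ} (hR : 0 < R) (hkR : 1 < (2:ℝ)^k * (2 * R)) :
    ∫⁻ y in Metric.ball 0 R, (‖f (x - y)‖₊ : ℝ≥0∞) ^ r ≤
      ENNReal.ofReal ((2 * R) ^ d * ((2:ℝ)^k * (2 * R)) ^ (ε * r)) * Mrke d r ε k f x ^ r := by
  set Q := cube d (WithLp.toLp 2 fun i => x i - R) (2 * R)
  have hball : Metric.ball 0 R ⊆ (x - ·) ⁻¹' Q := fun y hy =>
    sub_mem_cube_of_norm_le x (mem_ball_zero_iff.1 hy).le
  have hx : x ∈ Q := by simpa using sub_mem_cube_of_norm_le x (y := 0) (by simpa using hR.le)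
  calc _ ≤ ∫⁻ y in (x - ·) ⁻¹' Q, (‖f (x - y)‖₊ : ℝ≥0∞) ^ r := lintegral_mono_set hball
    _ = ∫⁻ z in Q, (‖f z‖₊ : ℝ≥0∞) ^ r :=
      (Measure.measurePreserving_sub_left volume x).setLIntegral_comp_preimage_emb
        (MeasurableEquiv.subLeft x).measurableEmbedding (fun z => (‖f z‖₊ : ℝ≥0∞) ^ r) Q
    _ ≤ _ := setLIntegral_cube_le_Mrke hr ε k f (by positivity) hkR hx

lemma div_weight_le_tsum_indicator {d : ℕ} (k : ℤ) {p : ℝ} (hp : 0 ≤ p) (g : Euc d → ℝ≥0∞)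
    (y : Euc d) :
    g y / ENNReal.ofReal ((1 + (2:ℝ)^k * ‖y‖) ^ p) ≤
      ∑' n : ℕ, (Metric.ball 0 (2 ^ (n + 1) / (2:ℝ)^k)).indicator
        (fun z => (ENNReal.ofReal (((2:ℝ) ^ n) ^ p))⁻¹ * g z) y := by
  have hs : 0 ≤ (2:ℝ)^k * ‖y‖ := by positivity
  obtain ⟨n, hle, hlt⟩ := exists_nat_pow_near (le_add_of_nonneg_right hs) (one_lt_two (α := ℝ))
  refine le_trans ?_ (ENNReal.le_tsum n)
  rw [Set.indicator_of_mem, div_eq_mul_inv, mul_comm]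
  · gcongr
  · rw [mem_ball_zero_iff, lt_div_iff₀ (by positivity)]
    linarith

lemma dyadic_factor_eq (n : ℕ) (k : ℤ) (d : ℕ) (p q : ℝ) :
    (((2:ℝ) ^ n) ^ p)⁻¹ * ((2 * (2 ^ (n + 1) / (2:ℝ)^k)) ^ d *
      ((2:ℝ)^k * (2 * (2 ^ (n + 1) / (2:ℝ)^k))) ^ q) =
      2 ^ (2 * (d + q)) * (2 ^ (d + q - p)) ^ n * 2 ^ (-(k:ℝ) * d) := by
  rw [show 2 * (2 ^ (n + 1) / (2:ℝ)^k) = 2 ^ (n + 2) / 2 ^ k by ring,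
    mul_div_cancel₀ _ (zpow_ne_zero k two_ne_zero)]
  simp only [← Real.rpow_natCast, ← Real.rpow_intCast, ← Real.rpow_mul two_pos.le,
    ← Real.rpow_neg two_pos.le, ← Real.rpow_sub two_pos, ← Real.rpow_add two_pos]
  congr 1
  push_cast
  ring

lemma setLIntegral_dyadic_ball_le {d : ℕ} {t : ℝ} (ht : 0 < t) (ε p : ℝ) (k : ℤ)
    (f : Euc d → ℂ) (x : Euc d) (n : ℕ) :
    (ENNReal.ofReal (((2:ℝ) ^ n) ^ p))⁻¹ *
        ∫⁻ y in Metric.ball 0 (2 ^ (n + 1) / (2:ℝ)^k), (‖f (x - y)‖₊ : ℝ≥0∞) ^ t ≤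
      ENNReal.ofReal (2 ^ (2 * (d + ε * t))) * ENNReal.ofReal (2 ^ (d + ε * t - p)) ^ n *
        (ENNReal.ofReal (2 ^ (-(k:ℝ) * d)) * Mrke d t ε k f x ^ t) := by
  have hkR : 1 < (2:ℝ)^k * (2 * (2 ^ (n + 1) / (2:ℝ)^k)) := by
    rw [show (2:ℝ)^k * (2 * (2 ^ (n + 1) / 2^k)) = 2 ^ (n + 2) by field_simp; ring]
    exact one_lt_pow₀ (by norm_num) (Nat.succ_ne_zero _)
  calc _ ≤ (ENNReal.ofReal (((2:ℝ) ^ n) ^ p))⁻¹ *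
        (ENNReal.ofReal ((2 * (2 ^ (n + 1) / (2:ℝ)^k)) ^ d *
          ((2:ℝ)^k * (2 * (2 ^ (n + 1) / (2:ℝ)^k))) ^ (ε * t)) * Mrke d t ε k f x ^ t) := by
        gcongr
        exact setLIntegral_ball_le_Mrke ht ε k f x (by positivity) hkR
    _ = _ := by
        rw [← ENNReal.ofReal_inv_of_pos (by positivity), ← mul_assoc, ← ofReal_mul (by positivity),
          dyadic_factor_eq n k d p (ε * t), ofReal_mul (by positivity), ofReal_mul (by positivity),
          ofReal_pow (by positivity)]
        ring

theorem stmt0_general (d : ℕ) (σ t ε : ℝ) (ht : 0 < t) (hσ : (d:ℝ)/t < σ)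
    (hε : ε < σ - (d:ℝ)/t) :
    ∃ C : ℝ≥0∞, C ≠ ∞ ∧ ∀ (k : ℤ) (f : Euc d → ℂ), Measurable f → ∀ x : Euc d,
      (∫⁻ y, (‖f (x - y)‖₊ : ℝ≥0∞) ^ t / ENNReal.ofReal ((1 + (2:ℝ)^k * ‖y‖) ^ (σ * t)))
        ≤ C * ENNReal.ofReal ((2:ℝ) ^ (-(k:ℝ) * d)) * (Mrke d t ε k f x) ^ t := by
  have hp : 0 ≤ σ * t := mul_nonneg ((div_nonneg d.cast_nonneg ht.le).trans hσ.le) ht.le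
  have hratio : (2:ℝ) ^ (d + ε * t - σ * t) < 1 := by
    have := mul_lt_mul_of_pos_right hε ht
    rw [sub_mul, div_mul_cancel₀ _ ht.ne'] at this
    exact Real.rpow_lt_one_of_one_lt_of_neg one_lt_two (by linarith)
  refine ⟨ENNReal.ofReal (2 ^ (2 * (d + ε * t))) *
      (1 - ENNReal.ofReal (2 ^ (d + ε * t - σ * t)))⁻¹,
    mul_ne_top ofReal_ne_top (inv_ne_top.2 (tsub_pos_of_lt (ofReal_lt_one.2 hratio)).ne'), ?_⟩
  intro k f hf x
  have hmeas : Measurable fun y => (‖f (x - y)‖₊ : ℝ≥0∞) ^ t := by fun_prop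
  calc _ ≤ ∫⁻ y, ∑' n : ℕ, (Metric.ball 0 (2 ^ (n + 1) / (2:ℝ)^k)).indicator
          (fun z => (ENNReal.ofReal (((2:ℝ) ^ n) ^ (σ * t)))⁻¹ * ‖f (x - z)‖₊ ^ t) y :=
        lintegral_mono fun y => div_weight_le_tsum_indicator k hp _ y
    _ = ∑' n : ℕ, (ENNReal.ofReal (((2:ℝ) ^ n) ^ (σ * t)))⁻¹ *
          ∫⁻ y in Metric.ball 0 (2 ^ (n + 1) / (2:ℝ)^k), (‖f (x - y)‖₊ : ℝ≥0∞) ^ t := by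
        rw [lintegral_tsum fun n => ((hmeas.const_mul _).indicator measurableSet_ball).aemeasurable]
        simp only [lintegral_indicator measurableSet_ball, lintegral_const_mul _ hmeas]
    _ ≤ ∑' n : ℕ, ENNReal.ofReal (2 ^ (2 * (d + ε * t))) *
          ENNReal.ofReal (2 ^ (d + ε * t - σ * t)) ^ n *
            (ENNReal.ofReal (2 ^ (-(k:ℝ) * d)) * Mrke d t ε k f x ^ t) :=
        ENNReal.tsum_le_tsum fun n => setLIntegral_dyadic_ball_le ht ε (σ * t) k f x n
    _ = _ := by
        rw [ENNReal.tsum_mul_right, ENNReal.tsum_mul_left, ENNReal.tsum_geometric]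
        ring

theorem stmt0 (d : ℕ) (hd : 0 < d) (σ t ε : ℝ) (ht : 0 < t) (hσ : (d:ℝ)/t < σ)
    (hε0 : 0 < ε) (hε : ε < σ - (d:ℝ)/t) :
    ∃ C : ℝ≥0∞, C ≠ ∞ ∧ ∀ (k : ℤ) (f : Euc d → ℂ), Measurable f → ∀ x : Euc d,
      (∫⁻ y, (‖f (x - y)‖₊ : ℝ≥0∞) ^ t / ENNReal.ofReal ((1 + (2:ℝ)^k * ‖y‖) ^ (σ * t)))
        ≤ C * ENNReal.ofReal ((2:ℝ) ^ (-(k:ℝ) * d)) * (Mrke d t ε k f x) ^ t :=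
  stmt0_general d σ t ε ht hσ hε
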